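/- For every real symmetric 3 × 3 matrix A with tr A = 0 and every s ∈ ℝ, one has Φ₃(γ'(s), γ'(s), A) = −(1/3) A₃₃; in particular, this quantity is independent of s. (This is the real-entries instance of the computation showing that the quadratic tensor field K_A(Y,Z) = Φ(Y,Z,A) on the Cayley projective plane takes the constant value −r₃/3 along the model geodesic.) -/

import Mathlib

/-!
Only the permutations that put `A` in the third column contribute to `Φ₃(B, B, A)` when the
third row and column of `B` vanish, so `Φ₃(B, B, A) = (1/3) det(b) A₃₃` with `b` the upper-left
2 × 2 block of `B`. For `B = γ'(s)` that block has determinant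
`-4 cos²s sin²s - (cos²s - sin²s)² = -(cos²s + sin²s)² = -1`.
-/

noncomputable section

open Real

/-- The symmetric trilinear form `Φ₃` on 3 × 3 real matrices obtained by polarizing the
determinant: `Φ₃(A₁,A₂,A₃) = (1/6) ∂³/∂t₁∂t₂∂t₃ det(t₁A₁ + t₂A₂ + t₃A₃)`, which equals
`(1/6)` times the sum, over the six permutations `σ` of `{1,2,3}`, of the mixed
determinant of `(A_{σ(1)}, A_{σ(2)}, A_{σ(3)})` (the determinant of the matrix whose
`j`-th column is the `j`-th column of `A_{σ(j)}`). -/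
def Phi3 (A₁ A₂ A₃ : Matrix (Fin 3) (Fin 3) ℝ) : ℝ :=
  (1 / 6) * ∑ σ : Equiv.Perm (Fin 3),
    Matrix.det (Matrix.of fun i j : Fin 3 => (![A₁, A₂, A₃] (σ j)) i j)

/-- The velocity `γ'(s)` of the model geodesic `γ(s)` (with entries
`γ₁₁ = cos²s, γ₁₂ = γ₂₁ = cos s sin s, γ₂₂ = sin²s`, other entries 0). -/
def gammaDot (s : ℝ) : Matrix (Fin 3) (Fin 3) ℝ :=
  Matrix.of
    ![![-2 * cos s * sin s, cos s ^ 2 - sin s ^ 2, 0],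
      ![cos s ^ 2 - sin s ^ 2, 2 * cos s * sin s, 0],
      ![0, 0, 0]]

theorem Phi3_self_self_of_col_row_two_eq_zero (B A : Matrix (Fin 3) (Fin 3) ℝ)
    (hcol : ∀ i, B i 2 = 0) (hrow : ∀ j, B 2 j = 0) :
    Phi3 B B A = (1 / 3) * (B 0 0 * B 1 1 - B 0 1 * B 1 0) * A 2 2 := by
  have huniv : (Finset.univ : Finset (Equiv.Perm (Fin 3))) =
      {1, Equiv.swap 0 1, Equiv.swap 0 2, Equiv.swap 1 2,
       Equiv.swap 0 1 * Equiv.swap 1 2, Equiv.swap 1 2 * Equiv.swap 0 1} := by decide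
  rw [Phi3, huniv, Finset.sum_insert (by decide), Finset.sum_insert (by decide),
    Finset.sum_insert (by decide), Finset.sum_insert (by decide),
    Finset.sum_insert (by decide), Finset.sum_singleton]
  simp only [Matrix.det_fin_three, Matrix.of_apply, Equiv.Perm.coe_one, id_eq,
    Equiv.Perm.coe_mul, Function.comp_apply, Equiv.swap_apply_def, Fin.isValue, Fin.reduceEq,
    if_true, if_false, Matrix.cons_val_zero, Matrix.cons_val_one, Matrix.cons_val_two,
    Matrix.head_cons, Matrix.tail_cons, hcol, hrow]
  ring

theorem gammaDot_apply_two (s : ℝ) (i : Fin 3) : gammaDot s i 2 = 0 := by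
  fin_cases i <;> simp [gammaDot]

theorem gammaDot_two_apply (s : ℝ) (j : Fin 3) : gammaDot s 2 j = 0 := by
  fin_cases j <;> simp [gammaDot]

theorem gammaDot_det_two (s : ℝ) :
    gammaDot s 0 0 * gammaDot s 1 1 - gammaDot s 0 1 * gammaDot s 1 0 = -1 := by
  simp only [gammaDot, Matrix.of_apply, Matrix.cons_val_zero, Matrix.cons_val_one]
  linear_combination -(sin s ^ 2 + cos s ^ 2 + 1) * sin_sq_add_cos_sq s

theorem stmt9_general (A : Matrix (Fin 3) (Fin 3) ℝ) (s : ℝ) :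
    Phi3 (gammaDot s) (gammaDot s) A = -(1 / 3) * A 2 2 := by
  rw [Phi3_self_self_of_col_row_two_eq_zero _ _ (gammaDot_apply_two s) (gammaDot_two_apply s),
    gammaDot_det_two]
  ring

/-- for every real symmetric 3 × 3 matrix `A` of trace zero and every
`s ∈ ℝ`, one has `Φ₃(γ'(s), γ'(s), A) = −(1/3) A₃₃`; in particular this is independent
of `s`. -/
theorem stmt9 (A : Matrix (Fin 3) (Fin 3) ℝ) (hsymm : A.IsSymm) (htr : A.trace = 0)
    (s : ℝ) :
    Phi3 (gammaDot s) (gammaDot s) A = -(1 / 3) * A 2 2 :=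
  stmt9_general A s
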